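/- arXiv:2605.03664 — 6 statements merged into one kernel-verified Lean document; each statement's English description precedes it below -/
import Mathlib

section
/- Let 0 < λ < 1 and 0 < q ≤ 1. For every real z with |z| < 1, the series Σ_{u=1}^∞ (F_{q,−λ}(u−1) − F_{q,−λ}(u))·z^u converges and its sum equals λz/((1−z)^q + λ). (This is the probability generating function of the discrete Mittag-Leffler waiting time T with P(T > t) = F_{q,−λ}(t).) -/
/-- Generalized binomial coefficient `ĥ_α(x) = Γ(x+α)/(Γ(α+1)·Γ(x))`. -/
noncomputable def hhat (α x : ℝ) : ℝ :=
  Real.Gamma (x + α) / (Real.Gamma (α + 1) * Real.Gamma x)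

/-- Discrete Mittag-Leffler function `F_{q,λ}(t) = Σ_m ĥ_{qm}(t)·λ^m`, with `F_{q,λ}(0) = 1`. -/
noncomputable def dML (q lam : ℝ) (t : ℕ) : ℝ :=
  if t = 0 then 1 else ∑' m : ℕ, hhat (q * m) (t : ℝ) * lam ^ m

/-!
Expanding `F_{q,μ}(u) - F_{q,μ}(u+1)` in its defining series and summing over `u` first, the
binomial series `Σ_u ĥ_α(u) x^u = x (1-x)^(-(α+1))` turns the generating function into the
geometric series `-z Σ_{m ≥ 1} (μ / (1-z)^q)^m = -μz / ((1-z)^q - μ)`, taken at `μ = -λ`.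
The interchange of summations is absolutely convergent only while `|μ| < (1-|z|)^q`, i.e. for
small `z`. The identity reaches the whole unit disc because `λw / ((1-w)^q + λ)` is holomorphic
there (`Re (1-w)^q > 0` for `q ≤ 1`): its Taylor series at `0` converges on the disc and, by
uniqueness of power-series coefficients, it is the series in question.
-/

open Filter Topology

-- `Real.Gamma 0 = 0`, so this holds for every `α` (a junk value when `α = 0`).
lemma hhat_zero_right (α : ℝ) : hhat α 0 = 0 := by
  simp [hhat, Real.Gamma_zero]

lemma hhat_zero_left {x : ℝ} (hx : 0 < x) : hhat 0 x = 1 := by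
  rw [hhat, add_zero, zero_add, Real.Gamma_one, one_mul, div_self (Real.Gamma_pos_of_pos hx).ne']

lemma hhat_one {α : ℝ} (hα : -1 < α) : hhat α 1 = 1 := by
  rw [hhat, Real.Gamma_one, mul_one, add_comm, div_self (Real.Gamma_pos_of_pos (by linarith)).ne']

lemma hhat_nonneg {α : ℝ} (hα : -1 < α) (n : ℕ) : 0 ≤ hhat α n := by
  rcases n with _ | n
  · simp [hhat_zero_right]
  · push_cast
    have : (0 : ℝ) < n + 1 + α := by linarith [(n.cast_nonneg : (0 : ℝ) ≤ n)]
    exact div_nonneg (Real.Gamma_pos_of_pos this).le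
      (mul_pos (Real.Gamma_pos_of_pos (by linarith)) (Real.Gamma_pos_of_pos (by positivity))).le

lemma hhat_add_one {α x : ℝ} (hx : x ≠ 0) (hxα : x + α ≠ 0) :
    hhat α (x + 1) = (x + α) / x * hhat α x := by
  rw [hhat, hhat, add_right_comm, Real.Gamma_add_one hxα, Real.Gamma_add_one hx]
  field_simp

lemma hhat_natCast_le {α : ℝ} (hα : 0 ≤ α) (n : ℕ) : hhat α n ≤ (1 + α) ^ n := by
  induction n with
  | zero => simp [hhat_zero_right]
  | succ n ih =>
    rcases n.eq_zero_or_pos with rfl | hn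
    · rw [zero_add, Nat.cast_one, hhat_one (by linarith), pow_one]
      linarith
    have hn' : (1 : ℝ) ≤ n := by exact_mod_cast hn
    have hratio : ((n : ℝ) + α) / n ≤ 1 + α := by
      rw [div_le_iff₀ (by positivity)]; nlinarith
    push_cast
    rw [hhat_add_one (by positivity) (by positivity), pow_succ']
    exact mul_le_mul hratio ih (hhat_nonneg (by linarith) n) (by linarith)

lemma Real.Gamma_add_nat_eq_mul_ascPochhammer {x : ℝ} (hx : 0 < x) (n : ℕ) :
    Real.Gamma (x + n) = Real.Gamma x * (ascPochhammer ℝ n).eval x := by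
  induction n with
  | zero => simp
  | succ n ih =>
    rw [Nat.cast_succ, ← add_assoc, Real.Gamma_add_one (by positivity), ih,
      ascPochhammer_succ_right, Polynomial.eval_mul]
    simp only [Polynomial.eval_add, Polynomial.eval_X, Polynomial.eval_natCast]
    ring

lemma hhat_natCast_add_one_eq_choose {α : ℝ} (hα : -1 < α) (n : ℕ) :
    hhat α (n + 1) = Ring.choose (α + n) n := by
  have hchoose : Ring.choose (α + n) n = (ascPochhammer ℝ n).eval (α + 1) / n.factorial := by
    rw [eq_div_iff (by positivity), show α + n = α + 1 + n - 1 by ring, ← Ring.multichoose_eq,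
      ← Polynomial.ascPochhammer_smeval_eq_eval,
      ← Ring.factorial_nsmul_multichoose_eq_ascPochhammer, nsmul_eq_mul, mul_comm]
  have hα1 : 0 < α + 1 := by linarith
  rw [hchoose, hhat, Real.Gamma_nat_eq_factorial, show (n : ℝ) + 1 + α = α + 1 + n by ring,
    Real.Gamma_add_nat_eq_mul_ascPochhammer hα1,
    mul_div_mul_left _ _ (Real.Gamma_pos_of_pos hα1).ne']

lemma hasSum_hhat_succ_mul_pow {α x : ℝ} (hα : -1 < α) (hx : |x| < 1) :
    HasSum (fun n : ℕ => hhat α (n + 1) * x ^ n) ((1 - x) ^ (-(α + 1))) := by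
  have hx' : x ∈ Metric.eball (0 : ℝ) 1 := by
    rw [← ENNReal.coe_one, Metric.eball_coe]; simpa using hx
  have h := (Real.one_div_one_sub_rpow_hasFPowerSeriesOnBall_zero (α + 1)).hasSum hx'
  have hcoeff (n : ℕ) : Ring.choose (α + 1 + n - 1) n = hhat α (n + 1) := by
    rw [hhat_natCast_add_one_eq_choose hα, add_right_comm, add_sub_cancel_right]
  simp only [zero_add, FormalMultilinearSeries.ofScalars_apply_eq, smul_eq_mul, hcoeff] at h
  rwa [Real.rpow_neg (by linarith [le_abs_self x]), ← one_div]

lemma hasSum_hhat_mul_pow {α x : ℝ} (hα : -1 < α) (hx : |x| < 1) :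
    HasSum (fun n : ℕ => hhat α n * x ^ n) (x * (1 - x) ^ (-(α + 1))) := by
  rw [← hasSum_nat_add_iff' 1]
  simpa [hhat_zero_right, pow_succ, mul_assoc, mul_comm x, mul_left_comm x] using
    (hasSum_hhat_succ_mul_pow hα hx).mul_left x

lemma hasSum_hhat_mul_pow_succ {α x : ℝ} (hα : -1 < α) (hx : |x| < 1) :
    HasSum (fun n : ℕ => hhat α n * x ^ (n + 1)) (x ^ 2 * (1 - x) ^ (-(α + 1))) := by
  have h := (hasSum_hhat_mul_pow hα hx).mul_left x
  rw [← mul_assoc, ← sq] at h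
  exact h.congr_fun fun n => by ring

lemma hasSum_hhat_succ_mul_pow_succ {α x : ℝ} (hα : -1 < α) (hx : |x| < 1) :
    HasSum (fun n : ℕ => hhat α (n + 1) * x ^ (n + 1)) (x * (1 - x) ^ (-(α + 1))) :=
  ((hasSum_hhat_succ_mul_pow hα hx).mul_left x).congr_fun fun n => by ring

lemma summable_hhat_mul_pow {q μ : ℝ} (hq : 0 ≤ q) (hμ : |μ| < 1) (t : ℕ) :
    Summable (fun m : ℕ => hhat (q * m) t * μ ^ m) := by
  have hgeom : Summable (fun m : ℕ => (1 + q) ^ t * ((m : ℝ) ^ t * |μ| ^ m)) :=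
    (summable_pow_mul_geometric_of_norm_lt_one (R := ℝ) t (r := |μ|)
      (by rwa [Real.norm_eq_abs, abs_abs])).mul_left _
  refine hgeom.of_norm_bounded_eventually ?_
  rw [Nat.cofinite_eq_atTop]
  filter_upwards [eventually_ge_atTop 1] with m hm
  have hm' : (1 : ℝ) ≤ m := by exact_mod_cast hm
  have hqm : 0 ≤ q * m := by positivity
  have hbound : hhat (q * m) t ≤ ((1 + q) * m) ^ t :=
    (hhat_natCast_le hqm t).trans (pow_le_pow_left₀ (by positivity) (by nlinarith) t)
  rw [norm_mul, norm_pow, Real.norm_eq_abs, Real.norm_eq_abs,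
    abs_of_nonneg (hhat_nonneg (by linarith) t), ← mul_assoc, ← mul_pow]
  exact mul_le_mul_of_nonneg_right hbound (by positivity)

lemma hasSum_dML_sub_one {q μ : ℝ} (hq : 0 ≤ q) (hμ : |μ| < 1) (t : ℕ) :
    HasSum (fun m : ℕ => hhat (q * (m + 1)) t * μ ^ (m + 1)) (dML q μ t - 1) := by
  rcases t with _ | t
  · simp [dML, hhat_zero_right, hasSum_zero]
  have h := (hasSum_nat_add_iff' 1).2 (summable_hhat_mul_pow hq hμ (t + 1)).hasSum
  simp only [Finset.range_one, Finset.sum_singleton, Nat.cast_zero, mul_zero, pow_zero, mul_one,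
    Nat.cast_add_one, hhat_zero_left (show (0 : ℝ) < t + 1 by positivity)] at h
  rwa [dML, if_neg t.succ_ne_zero, Nat.cast_add_one]

theorem Summable.hasSum_prod_fiberwise_swap {β γ E : Type*} [AddCommMonoid E]
    [TopologicalSpace E] [ContinuousAdd E] [T3Space E] {f : β × γ → E} (hf : Summable f)
    {g : β → E} {h : γ → E} {s : E} (hg : ∀ b, HasSum (fun c => f (b, c)) (g b))
    (hgs : HasSum g s) (hh : ∀ c, HasSum (fun b => f (b, c)) (h c)) : HasSum h s := by
  have hfs : HasSum f s := (hf.hasSum.prod_fiberwise hg).unique hgs ▸ hf.hasSum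
  exact ((Equiv.prodComm γ β).hasSum_iff.2 hfs).prod_fiberwise hh

lemma pow_succ_mul_rpow_neg {y : ℝ} (hy : 0 < y) (μ q : ℝ) (m : ℕ) :
    μ ^ (m + 1) * y ^ (-(q * (m + 1) + 1)) = y⁻¹ * (μ / y ^ q) ^ (m + 1) := by
  rw [neg_add, Real.rpow_add hy, Real.rpow_neg_one, Real.rpow_neg hy.le,
    Real.rpow_mul hy.le, ← Nat.cast_add_one, Real.rpow_natCast, div_pow]
  field_simp

lemma hasSum_mul_pow_succ {r : ℝ} (hr : |r| < 1) (c : ℝ) :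
    HasSum (fun m : ℕ => c * r ^ (m + 1)) (c * r / (1 - r)) :=
  ((hasSum_geometric_of_abs_lt_one hr).mul_left (c * r)).congr_fun fun m => by ring

section SmallDisc

variable {q μ z : ℝ} (hq : 0 ≤ q) (hz : |z| < 1) (hμ : |μ| < (1 - |z|) ^ q)
include hq hz hμ

lemma summable_pow_succ_mul_hhat_sub_hhat_succ :
    Summable (fun p : ℕ × ℕ => μ ^ (p.1 + 1) *
      ((hhat (q * (p.1 + 1)) p.2 - hhat (q * (p.1 + 1)) (p.2 + 1)) * z ^ (p.2 + 1))) := by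
  have hα (m : ℕ) : -1 < q * (m + 1) := neg_one_lt_zero.trans_le (by positivity)
  have hz' : |(|z|)| < 1 := by rwa [abs_abs]
  have h1z : 0 < 1 - |z| := by linarith
  have hR : |(|μ| / (1 - |z|) ^ q)| < 1 := by
    have := Real.rpow_pos_of_pos h1z q
    rwa [abs_div, abs_abs, abs_of_pos this, div_lt_one this]
  have hrow (m : ℕ) : HasSum (fun u : ℕ => |μ| ^ (m + 1) *
      ((hhat (q * (m + 1)) u + hhat (q * (m + 1)) (u + 1)) * |z| ^ (u + 1)))
      ((|z| ^ 2 + |z|) * ((1 - |z|)⁻¹ * (|μ| / (1 - |z|) ^ q) ^ (m + 1))) := by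
    have h := ((hasSum_hhat_mul_pow_succ (hα m) hz').add
      (hasSum_hhat_succ_mul_pow_succ (hα m) hz')).mul_left (|μ| ^ (m + 1))
    rw [← add_mul, mul_left_comm, pow_succ_mul_rpow_neg h1z] at h
    exact h.congr_fun fun u => by ring
  have hE : Summable (fun p : ℕ × ℕ => |μ| ^ (p.1 + 1) *
      ((hhat (q * (p.1 + 1)) p.2 + hhat (q * (p.1 + 1)) (p.2 + 1)) * |z| ^ (p.2 + 1))) := by
    refine (summable_prod_of_nonneg fun p => ?_).2 ⟨fun m => (hrow m).summable, ?_⟩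
    · have h0 := hhat_nonneg (hα p.1) p.2
      have h1 : 0 ≤ hhat (q * (p.1 + 1)) (p.2 + 1) := by
        exact_mod_cast hhat_nonneg (hα p.1) (p.2 + 1)
      positivity
    · simp only [(hrow _).tsum_eq]
      exact (hasSum_mul_pow_succ hR ((|z| ^ 2 + |z|) * (1 - |z|)⁻¹)).summable.congr
        fun m => by ring
  refine hE.of_norm_bounded fun p => ?_
  have h0 := hhat_nonneg (hα p.1) p.2
  have h1 : 0 ≤ hhat (q * (p.1 + 1)) (p.2 + 1) := by
    exact_mod_cast hhat_nonneg (hα p.1) (p.2 + 1)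
  rw [norm_mul, norm_mul, norm_pow, norm_pow, Real.norm_eq_abs, Real.norm_eq_abs,
    Real.norm_eq_abs]
  gcongr
  exact (abs_sub _ _).trans_eq (by rw [abs_of_nonneg h0, abs_of_nonneg h1])

lemma hasSum_dML_sub_mul_pow_succ_of_lt :
    HasSum (fun u : ℕ => (dML q μ u - dML q μ (u + 1)) * z ^ (u + 1))
      (-(μ * z) / ((1 - z) ^ q - μ)) := by
  have hα (m : ℕ) : -1 < q * (m + 1) := neg_one_lt_zero.trans_le (by positivity)
  have h1z : 0 < 1 - z := by linarith [le_abs_self z]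
  have hpos : 0 < (1 - z) ^ q := Real.rpow_pos_of_pos h1z q
  have hμ1 : |μ| < 1 :=
    hμ.trans_le (Real.rpow_le_one (by linarith) (by linarith [abs_nonneg z]) hq)
  have hr : |μ / (1 - z) ^ q| < 1 := by
    rw [abs_div, abs_of_pos hpos, div_lt_one hpos]
    exact hμ.trans_le (Real.rpow_le_rpow (by linarith) (by linarith [le_abs_self z]) hq)
  refine (summable_pow_succ_mul_hhat_sub_hhat_succ hq hz hμ).hasSum_prod_fiberwise_swap
    (g := fun m => -z * (μ / (1 - z) ^ q) ^ (m + 1)) (fun m => ?_) ?_ (fun u => ?_)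
  · have h := ((hasSum_hhat_mul_pow_succ (hα m) hz).sub
      (hasSum_hhat_succ_mul_pow_succ (hα m) hz)).mul_left (μ ^ (m + 1))
    rw [← sub_mul, mul_left_comm, pow_succ_mul_rpow_neg h1z,
      show z ^ 2 - z = -z * (1 - z) by ring, mul_assoc, mul_inv_cancel_left₀ h1z.ne'] at h
    exact h.congr_fun fun u => by ring
  · convert hasSum_mul_pow_succ hr (-z) using 1
    field_simp
  · have h := ((hasSum_dML_sub_one hq hμ1 u).sub
      (hasSum_dML_sub_one hq hμ1 (u + 1))).mul_right (z ^ (u + 1))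
    rw [sub_sub_sub_cancel_right] at h
    exact h.congr_fun fun m => by push_cast; ring

end SmallDisc

-- At `n = 0` the truncated subtraction `n - 1 = 0` makes the coefficient `F 0 - F 0 = 0`.
lemma hasSum_sub_mul_pow_iff {R : Type*} [Ring R] [TopologicalSpace R]
    [IsTopologicalAddGroup R] (F : ℕ → R) (x s : R) :
    HasSum (fun n : ℕ => (F (n - 1) - F n) * x ^ n) s ↔
      HasSum (fun n : ℕ => (F n - F (n + 1)) * x ^ (n + 1)) s := by
  rw [← hasSum_nat_add_iff' 1]
  simp

lemma eq_of_eventually_hasSum_pow_smul {𝕜 E : Type*} [NontriviallyNormedField 𝕜]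
    [NormedAddCommGroup E] [NormedSpace 𝕜 E] {f : 𝕜 → E} {c d : ℕ → E}
    (hc : ∀ᶠ x in 𝓝 0, HasSum (fun n => x ^ n • c n) (f x))
    (hd : ∀ᶠ x in 𝓝 0, HasSum (fun n => x ^ n • d n) (f x)) : c = d := by
  let p (a : ℕ → E) : FormalMultilinearSeries 𝕜 𝕜 E :=
    fun n => ContinuousMultilinearMap.mkPiRing 𝕜 (Fin n) (a n)
  have hcoeff (a : ℕ → E) (n : ℕ) : (p a).coeff n = a n := by
    simp [p, FormalMultilinearSeries.coeff]
  have hp (a : ℕ → E) (ha : ∀ᶠ x in 𝓝 0, HasSum (fun n => x ^ n • a n) (f x)) :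
      HasFPowerSeriesAt f (p a) 0 := by
    rw [hasFPowerSeriesAt_iff]
    simpa [hcoeff] using ha
  funext n
  rw [← hcoeff c, ← hcoeff d, (hp c hc).eq_formalMultilinearSeries (hp d hd)]

lemma Complex.hasSum_of_eventually_hasSum_ofReal {f : ℂ → ℂ} {R : ℝ}
    (hf : DifferentiableOn ℂ f (Metric.ball 0 R)) {c : ℕ → ℂ}
    (hc : ∀ᶠ x : ℝ in 𝓝 0, HasSum (fun n => c n * (x : ℂ) ^ n) (f x))
    {w : ℂ} (hw : w ∈ Metric.ball 0 R) : HasSum (fun n => c n * w ^ n) (f w) := by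
  set a : ℕ → ℂ := fun n => (n.factorial : ℂ)⁻¹ * iteratedDeriv n f 0
  have ha {v : ℂ} (hv : v ∈ Metric.ball 0 R) : HasSum (fun n => a n * v ^ n) (f v) :=
    (Complex.hasSum_taylorSeries_on_ball hf hv).congr_fun fun n => by
      simp only [a, sub_zero, smul_eq_mul]; ring
  have hball : ∀ᶠ x : ℝ in 𝓝 0, (x : ℂ) ∈ Metric.ball 0 R :=
    Complex.continuous_ofReal.continuousAt.preimage_mem_nhds
      (by simpa using Metric.ball_mem_nhds (0 : ℂ) (Metric.pos_of_mem_ball hw))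
  have hca : c = a := by
    refine eq_of_eventually_hasSum_pow_smul (f := fun x : ℝ => f x) ?_ ?_
    · filter_upwards [hc] with x hx
      exact hx.congr_fun fun n => by rw [Complex.real_smul, Complex.ofReal_pow, mul_comm]
    · filter_upwards [hball] with x hx
      exact (ha hx).congr_fun fun n => by rw [Complex.real_smul, Complex.ofReal_pow, mul_comm]
  exact hca ▸ ha hw

lemma Complex.re_cpow_ofReal_pos {w : ℂ} (hw : 0 < w.re) {q : ℝ} (hq0 : 0 ≤ q)
    (hq1 : q ≤ 1) : 0 < (w ^ (q : ℂ)).re := by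
  have hw0 : w ≠ 0 := fun h => by simp [h] at hw
  have harg : |w.arg| < Real.pi / 2 := Complex.abs_arg_lt_pi_div_two_iff.2 (Or.inl hw)
  have hargq : |w.arg * q| < Real.pi / 2 := by
    rw [abs_mul, abs_of_nonneg hq0]
    nlinarith [abs_nonneg w.arg]
  rw [Complex.cpow_ofReal_re]
  exact mul_pos (Real.rpow_pos_of_pos (norm_pos_iff.2 hw0) q)
    (Real.cos_pos_of_mem_Ioo (abs_lt.1 hargq))

lemma differentiableOn_mul_div_one_sub_cpow_add {q lam : ℝ} (hq0 : 0 ≤ q) (hq1 : q ≤ 1)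
    (hlam : 0 ≤ lam) :
    DifferentiableOn ℂ (fun w : ℂ => lam * w / ((1 - w) ^ (q : ℂ) + lam))
      (Metric.ball 0 1) := by
  intro w hw
  have hre : 0 < (1 - w).re := by
    have := (Complex.re_le_norm w).trans_lt (mem_ball_zero_iff.1 hw)
    simp only [Complex.sub_re, Complex.one_re]
    linarith
  have hden : (1 - w) ^ (q : ℂ) + lam ≠ 0 := fun h => by
    have := congrArg Complex.re h
    simp only [Complex.add_re, Complex.ofReal_re, Complex.zero_re] at this
    linarith [Complex.re_cpow_ofReal_pos hre hq0 hq1]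
  have hslit : 1 - w ∈ Complex.slitPlane := Complex.mem_slitPlane_iff.2 (Or.inl hre)
  refine DifferentiableAt.differentiableWithinAt (.div (by fun_prop) ?_ hden)
  exact ((differentiableAt_id.const_sub 1).cpow_const hslit).add_const _

/-- The probability generating function of the discrete Mittag-Leffler waiting time:
for `|z| < 1`, `Σ_{u=1}^∞ (F_{q,−λ}(u−1) − F_{q,−λ}(u))·z^u = λz/((1−z)^q + λ)`. -/
theorem pgf_waiting_time (lam q : ℝ) (hlam0 : 0 < lam) (hlam1 : lam < 1)
    (hq0 : 0 < q) (hq1 : q ≤ 1) (z : ℝ) (hz : |z| < 1) :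
    HasSum (fun u : ℕ => (dML q (-lam) u - dML q (-lam) (u + 1)) * z ^ (u + 1))
      (lam * z / ((1 - z) ^ q + lam)) := by
  set G : ℂ → ℂ := fun w => lam * w / ((1 - w) ^ (q : ℂ) + lam)
  have hG {x : ℝ} (hx : |x| < 1) : G x = ((lam * x / ((1 - x) ^ q + lam) : ℝ) : ℂ) := by
    have h1x : 0 ≤ 1 - x := by linarith [le_abs_self x]
    simp only [G, ← Complex.ofReal_one, ← Complex.ofReal_sub, ← Complex.ofReal_cpow h1x]
    push_cast
    rfl
  have hsmall : ∀ᶠ x : ℝ in 𝓝 0, HasSum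
      (fun n : ℕ => ((dML q (-lam) (n - 1) - dML q (-lam) n : ℝ) : ℂ) * (x : ℂ) ^ n)
      (G x) := by
    have hcont : ContinuousAt (fun x : ℝ => (1 - |x|) ^ q) 0 :=
      (continuous_const.sub continuous_abs).continuousAt.rpow_const (Or.inr hq0.le)
    filter_upwards [Metric.ball_mem_nhds (0 : ℝ) one_pos,
      continuousAt_const.eventually_lt hcont (by simpa using hlam1)] with x hx hlamx
    rw [mem_ball_zero_iff, Real.norm_eq_abs] at hx
    have h := hasSum_dML_sub_mul_pow_succ_of_lt hq0.le hx (by rwa [abs_neg, abs_of_pos hlam0])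
    rw [neg_mul, neg_neg, sub_neg_eq_add, ← hasSum_sub_mul_pow_iff] at h
    rw [hG hx]
    exact (Complex.hasSum_ofReal.2 h).congr_fun fun n => by push_cast; rfl
  have h := Complex.hasSum_of_eventually_hasSum_ofReal (f := G)
    (differentiableOn_mul_div_one_sub_cpow_add hq0.le hq1 hlam0.le) hsmall
    (w := z) (by simpa using hz)
  rw [hG hz] at h
  exact (hasSum_sub_mul_pow_iff _ _ _).1 (Complex.hasSum_ofReal.1 (by exact_mod_cast h))
end

section
/- Let f : ℤ → ℝ, let a ≤ t be integers, and let m be a positive integer. Define the iterated sums g_1(t) := Σ_{u=a}^t f(u) and g_{k+1}(t) := Σ_{u=a}^t g_k(u). Then the m-fold iterated sum satisfies g_m(t) = Σ_{u=a}^t C(t−u+m−1, m−1)·f(u), where C denotes the binomial coefficient; equivalently, ∇_a^{−m} f(t) = Σ_{u=a}^t ĥ_{m−1}(t−u+1)·f(u). -/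
/-- The `m`-fold iterated sum operator `∇_a^{−m}`: `iterSum f a 0 = f`, and
`iterSum f a (k+1) t = Σ_{u=a}^t iterSum f a k u`, so that `iterSum f a m = ∇_a^{−m} f`
(in particular `iterSum f a 1 t = g_1(t) = Σ_{u=a}^t f(u)`). -/
noncomputable def iterSum (f : ℤ → ℝ) (a : ℤ) : ℕ → ℤ → ℝ
  | 0 => f
  | k + 1 => fun t => ∑ u ∈ Finset.Icc a t, iterSum f a k u

/-- Swapping a triangular double sum over integer intervals. -/
lemma sum_Icc_Icc_comm_int (a t : ℤ) (F : ℤ → ℤ → ℝ) :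
    ∑ u ∈ Finset.Icc a t, ∑ v ∈ Finset.Icc a u, F u v =
      ∑ v ∈ Finset.Icc a t, ∑ u ∈ Finset.Icc v t, F u v := by
  rw [Finset.sum_sigma', Finset.sum_sigma']
  refine Finset.sum_nbij' (fun x ↦ ⟨x.2, x.1⟩) (fun x ↦ ⟨x.2, x.1⟩) ?_ ?_ (fun _ _ ↦ rfl)
    (fun _ _ ↦ rfl) (fun _ _ ↦ rfl) <;>
  simp only [Finset.mem_Icc, Sigma.forall, Finset.mem_sigma] <;>
  rintro a b ⟨⟨h₁, h₂⟩, ⟨h₃, h₄⟩⟩ <;> omega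

/-- Hockey-stick identity over an integer interval. -/
lemma inner_hockey (m : ℕ) (hm : 1 ≤ m) (v : ℤ) (n : ℕ) :
    ∑ u ∈ Finset.Icc v (v + (n : ℤ)), ((Nat.choose (u - v + m - 1).toNat (m - 1) : ℝ)) =
      (((n : ℤ) + m).toNat.choose m : ℝ) := by
  induction n with
  | zero =>
    simp only [Nat.cast_zero, add_zero, Finset.Icc_self, Finset.sum_singleton, sub_self, zero_add]
    rw [show ((m:ℤ) - 1).toNat = m - 1 by omega, show ((m:ℤ)).toNat = m by omega,
      Nat.choose_self, Nat.choose_self]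
  | succ n ih =>
    have hcast : v + ((n:ℤ) + 1) = (v + (n:ℤ)) + 1 := by ring
    have hins : Finset.Icc v (v + (n:ℤ) + 1) = insert (v + (n:ℤ) + 1) (Finset.Icc v (v + (n:ℤ))) := by
      ext x; simp only [Finset.mem_Icc, Finset.mem_insert]; omega
    rw [Nat.cast_add, Nat.cast_one, hcast, hins, Finset.sum_insert (by simp), ih]
    obtain ⟨m', rfl⟩ : ∃ m', m = m' + 1 := ⟨m - 1, by omega⟩
    have h1 : ((n:ℤ) + (↑(m' + 1) : ℤ)).toNat = n + m' + 1 := by omega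
    have h2 : (v + (n:ℤ) + 1 - v + ↑(m' + 1) - 1).toNat = n + m' + 1 := by omega
    have h3 : ((n:ℤ) + 1 + (↑(m' + 1) : ℤ)).toNat = n + m' + 2 := by omega
    rw [h1, h2, h3]
    have : (n + m' + 2).choose (m' + 1) = (n + m' + 1).choose m' + (n + m' + 1).choose (m' + 1) :=
      Nat.choose_succ_succ (n + m' + 1) m'
    push_cast [this, Nat.add_sub_cancel]
    ring

/-- The `m`-fold iterated sum is a single sum against binomial coefficients:
`∇_a^{−m} f(t) = Σ_{u=a}^t C(t−u+m−1, m−1)·f(u) = Σ_{u=a}^t ĥ_{m−1}(t−u+1)·f(u)`. -/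
theorem iterSum_eq_binomial_sum (f : ℤ → ℝ) (a t : ℤ) (hat : a ≤ t)
    (m : ℕ) (hm : 1 ≤ m) :
    iterSum f a m t =
      ∑ u ∈ Finset.Icc a t, (Nat.choose (t - u + m - 1).toNat (m - 1) : ℝ) * f u := by
  induction m, hm using Nat.le_induction generalizing t with
  | base =>
    simp [iterSum]
  | succ m hm ih =>
    show (∑ u ∈ Finset.Icc a t, iterSum f a m u) = _
    rw [Finset.sum_congr rfl (fun u hu => ih u (Finset.mem_Icc.mp hu).1),
      sum_Icc_Icc_comm_int]
    refine Finset.sum_congr rfl fun v hv => ?_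
    rw [← Finset.sum_mul]
    congr 1
    have hvt : v ≤ t := (Finset.mem_Icc.mp hv).2
    have := inner_hockey m hm v (t - v).toNat
    rw [show v + ((t - v).toNat : ℤ) = t by omega] at this
    rw [this]
    congr 2
    push_cast
    omega
end

section
/- Let 0 < q < 1 and let α be a real number such that neither α nor α − q + 1 is a nonpositive integer. Then for every positive integer t, Σ_{u=1}^t ĥ_{−q}(t−u+1)·ĥ_α(u) = ĥ_{α−q+1}(t). -/
open Polynomial Finset
lemma desc_smeval_eq_eval (r : ℝ) (n : ℕ) :
    (descPochhammer ℤ n).smeval r = (descPochhammer ℝ n).eval r := by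
  rw [← Polynomial.aeval_eq_smeval, Polynomial.aeval_def, ← Polynomial.eval_map,
    descPochhammer_map]

lemma gamma_asc (x : ℝ) (hx : ∀ k : ℕ, x + k ≠ 0) (n : ℕ) :
    Real.Gamma (x + n) = (ascPochhammer ℝ n).eval x * Real.Gamma x := by
  induction n with
  | zero => simp
  | succ n ih =>
    have h : x + ((n : ℝ) + 1) = (x + n) + 1 := by ring
    rw [Nat.cast_succ, h, Real.Gamma_add_one (hx n), ascPochhammer_succ_eval, ih]
    ring

lemma hhat_nat (β : ℝ) (hβ : ∀ k : ℕ, β + 1 + k ≠ 0) (k : ℕ) :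
    hhat β ((k : ℝ) + 1) = (ascPochhammer ℝ k).eval (β + 1) / k.factorial := by
  have hΓ : Real.Gamma (β + 1) ≠ 0 := by
    apply Real.Gamma_ne_zero
    intro m
    have := hβ m
    intro h; apply this; rw [h]; ring
  unfold hhat
  have h1 : (k : ℝ) + 1 + β = (β + 1) + k := by ring
  rw [h1, gamma_asc _ hβ, Real.Gamma_nat_eq_factorial]
  rw [mul_comm (Real.Gamma (β+1)) _, mul_div_mul_right _ _ hΓ]

lemma key (x y : ℝ) (n : ℕ) :
    ∑ ij ∈ antidiagonal n, (ascPochhammer ℝ ij.1).eval x / ij.1.factorial *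
      ((ascPochhammer ℝ ij.2).eval y / ij.2.factorial) =
    (ascPochhammer ℝ n).eval (x + y) / n.factorial := by
  have hasc : ∀ (r : ℝ) (k : ℕ),
      (ascPochhammer ℝ k).eval r = (-1) ^ k * (descPochhammer ℝ k).eval (-r) := by
    intro r k
    have := ascPochhammer_eval_neg_eq_descPochhammer ℝ (-r) k
    simpa using this
  have hvdm := Ring.descPochhammer_smeval_add (R := ℝ) (r := -x) (s := -y) n (Commute.all _ _)
  simp only [desc_smeval_eq_eval] at hvdm
  have hxy : -x + -y = -(x + y) := by ring
  rw [hxy] at hvdm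
  rw [hasc (x + y) n, hvdm, Finset.mul_sum, Finset.sum_div]
  refine Finset.sum_congr rfl ?_
  intro ij hij
  have hsum : ij.1 + ij.2 = n := Finset.HasAntidiagonal.mem_antidiagonal.mp hij
  have h1 : ij.1 ≤ n := by omega
  have hj : ij.2 = n - ij.1 := by omega
  have hfact : ((n.choose ij.1 : ℕ) : ℝ) * ij.1.factorial * ij.2.factorial = n.factorial := by
    rw [hj]
    exact_mod_cast congrArg (Nat.cast : ℕ → ℝ) (Nat.choose_mul_factorial_mul_factorial h1)
  have hsign : ((-1 : ℝ)) ^ n = (-1) ^ ij.1 * (-1) ^ ij.2 := by rw [← pow_add, hsum]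
  have f1 : (ij.1.factorial : ℝ) ≠ 0 := Nat.cast_ne_zero.mpr (Nat.factorial_ne_zero _)
  have f2 : (ij.2.factorial : ℝ) ≠ 0 := Nat.cast_ne_zero.mpr (Nat.factorial_ne_zero _)
  have fc : ((n.choose ij.1 : ℕ) : ℝ) ≠ 0 := Nat.cast_ne_zero.mpr (Nat.choose_pos h1).ne'
  rw [hasc x, hasc y, hsign, ← hfact]
  field_simp



/-- Convolution formula: for `0 < q < 1` and suitable `α`, for every positive integer `t`,
`Σ_{u=1}^t ĥ_{−q}(t−u+1)·ĥ_α(u) = ĥ_{α−q+1}(t)`. -/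
theorem hhat_convolution (q α : ℝ) (hq0 : 0 < q) (hq1 : q < 1)
    (hα : ∀ n : ℕ, α ≠ -(n : ℝ)) (hαq : ∀ n : ℕ, α - q + 1 ≠ -(n : ℝ))
    (t : ℕ) (ht : 1 ≤ t) :
    ∑ u ∈ Finset.Icc 1 t, hhat (-q) ((t : ℝ) - (u : ℝ) + 1) * hhat α (u : ℝ) =
      hhat (α - q + 1) (t : ℝ) := by
  have hA : ∀ k : ℕ, α + 1 + (k : ℝ) ≠ 0 := by
    intro k h
    exact hα (k + 1) (by push_cast; linarith)
  have hQ : ∀ k : ℕ, -q + 1 + (k : ℝ) ≠ 0 := by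
    intro k
    have : (0 : ℝ) ≤ k := Nat.cast_nonneg k
    intro h
    linarith
  have hAQ : ∀ k : ℕ, (α - q + 1) + 1 + (k : ℝ) ≠ 0 := by
    intro k h
    exact hαq (k + 1) (by push_cast; linarith)
  obtain ⟨n, rfl⟩ : ∃ n, t = n + 1 := ⟨t - 1, by omega⟩
  rw [← Finset.Ico_add_one_right_eq_Icc, Finset.sum_Ico_eq_sum_range]
  have hkey := key (α + 1) (-q + 1) n
  rw [Finset.Nat.sum_antidiagonal_eq_sum_range_succ_mk] at hkey
  have hrhs : hhat (α - q + 1) ((n + 1 : ℕ) : ℝ) =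
      (ascPochhammer ℝ n).eval ((α + 1) + (-q + 1)) / n.factorial := by
    have : ((n + 1 : ℕ) : ℝ) = (n : ℝ) + 1 := by push_cast; ring
    rw [this, hhat_nat (α - q + 1) hAQ n]
    congr 1
    ring_nf
  rw [hrhs, ← hkey]
  have hrange : n + 1 + 1 - 1 = n + 1 := by omega
  rw [hrange]
  refine Finset.sum_congr rfl ?_
  intro i hi
  have hi' : i ≤ n := by
    have := Finset.mem_range.mp hi
    omega
  have e1 : ((n + 1 : ℕ) : ℝ) - ((1 + i : ℕ) : ℝ) + 1 = ((n - i : ℕ) : ℝ) + 1 := by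
    rw [Nat.cast_sub hi']
    push_cast
    ring
  have e2 : ((1 + i : ℕ) : ℝ) = (i : ℝ) + 1 := by push_cast; ring
  rw [e1, e2, hhat_nat (-q) hQ (n - i), hhat_nat α hA i]
  have e3 : -q + 1 = 1 - q := by ring
  rw [mul_comm]
end

section
/- Let 0 < q < 1 and let α be a real number such that neither α nor α − q + 1 is a nonpositive integer. Define the fractional sum D(s) := Σ_{u=1}^s ĥ_{−q}(s−u+1)·ĥ_α(u) for integers s ≥ 0 (empty sum for s = 0). Then for every positive integer t, D(t) − D(t−1) = ĥ_{α−q}(t); that is, the Riemann–Liouville fractional difference of order q satisfies ∇_1^q ĥ_α(t) = ĥ_{α−q}(t). -/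
/-!
For `Γ(β + 1) ≠ 0` the Gamma quotient `ĥ_β(n + 1)` is the rising binomial coefficient
`(β + 1)(β + 2)⋯(β + n) / n! = multichoose (β + 1) n`. The fractional sum `D(n + 1)` is then a
Cauchy product of two such sequences, which the Chu–Vandermonde identity collapses to
`multichoose (α - q + 2) n`, and Pascal's rule for `multichoose` turns `D(t) - D(t - 1)` into
`multichoose (α - q + 1) (t - 1) = ĥ_{α-q}(t)`.
-/

open Finset

/-- The fractional sum `∇_1^{−(1−q)} ĥ_α(s) = Σ_{u=1}^s ĥ_{−q}(s−u+1)·ĥ_α(u)`. -/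
noncomputable def fracSum (q α : ℝ) (s : ℕ) : ℝ :=
  ∑ u ∈ Finset.Icc 1 s, hhat (-q) ((s : ℝ) - (u : ℝ) + 1) * hhat α (u : ℝ)

-- Chu–Vandermonde for `choose` at `-r` and `-s`, after `choose (-r) n = (-1)ⁿ • multichoose r n`.
theorem Ring.multichoose_add {R : Type*} [CommRing R] [BinomialRing R] (r s : R) (n : ℕ) :
    Ring.multichoose (r + s) n =
      ∑ ij ∈ antidiagonal n, Ring.multichoose r ij.1 * Ring.multichoose s ij.2 := by
  have h := Ring.add_choose_eq n (Commute.all (-r) (-s))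
  rw [← neg_add, Ring.choose_neg'] at h
  have hsign : ∀ ij ∈ antidiagonal n, Ring.choose (-r) ij.1 * Ring.choose (-s) ij.2 =
      Int.negOnePow n • (Ring.multichoose r ij.1 * Ring.multichoose s ij.2) := by
    rintro ⟨i, j⟩ hij
    rw [HasAntidiagonal.mem_antidiagonal] at hij
    rw [Ring.choose_neg', Ring.choose_neg', smul_mul_smul_comm, ← hij, Nat.cast_add,
      Int.negOnePow_add]
  rw [sum_congr rfl hsign, ← smul_sum] at h
  exact smul_left_cancel _ h

theorem Ring.multichoose_eq_ascPochhammer_eval_div {K : Type*} [Field K] [CharZero K]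
    (r : K) (n : ℕ) :
    Ring.multichoose r n = (ascPochhammer K n).eval r / n.factorial := by
  rw [eq_div_iff (Nat.cast_ne_zero.2 n.factorial_ne_zero), mul_comm, ← nsmul_eq_mul,
    Ring.factorial_nsmul_multichoose_eq_ascPochhammer, Polynomial.ascPochhammer_smeval_eq_eval]

theorem Real.Gamma_add_natCast (x : ℝ) (hx : Real.Gamma x ≠ 0) (n : ℕ) :
    Real.Gamma (x + n) = (ascPochhammer ℝ n).eval x * Real.Gamma x := by
  induction n with
  | zero => simp
  | succ n ih =>
    have hxn : x + n ≠ 0 := fun h => hx ((Real.Gamma_eq_zero_iff x).2 ⟨n, by linarith⟩)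
    rw [Nat.cast_succ, ← add_assoc, Real.Gamma_add_one hxn, ih, ascPochhammer_succ_eval]
    ring

theorem hhat_natCast_add_one (β : ℝ) (hβ : Real.Gamma (β + 1) ≠ 0) (n : ℕ) :
    hhat β (n + 1) = Ring.multichoose (β + 1) n := by
  rw [hhat, show (n : ℝ) + 1 + β = β + 1 + n by ring, Real.Gamma_add_natCast _ hβ,
    Real.Gamma_nat_eq_factorial, Ring.multichoose_eq_ascPochhammer_eval_div]
  field_simp

theorem fracSum_succ_eq_sum_antidiagonal (q α : ℝ) (n : ℕ) :
    fracSum q α (n + 1) =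
      ∑ ij ∈ antidiagonal n, hhat (-q) ((ij.2 : ℝ) + 1) * hhat α ((ij.1 : ℝ) + 1) := by
  rw [fracSum, Nat.sum_antidiagonal_eq_sum_range_succ_mk, range_eq_Ico,
    ← Ico_add_one_right_eq_Icc, show Ico 1 (n + 1 + 1) = Ico (0 + 1) (n + 1 + 1) from rfl,
    ← sum_Ico_add']
  refine sum_congr rfl fun i hi => ?_
  have hin : i ≤ n := Nat.lt_succ_iff.mp (mem_Ico.mp hi).2
  push_cast [hin]
  ring_nf

theorem fracSum_succ (q α : ℝ) (hq : Real.Gamma (-q + 1) ≠ 0) (hα : Real.Gamma (α + 1) ≠ 0)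
    (n : ℕ) : fracSum q α (n + 1) = Ring.multichoose (α - q + 2) n := by
  rw [fracSum_succ_eq_sum_antidiagonal, show α - q + 2 = (α + 1) + (-q + 1) by ring,
    Ring.multichoose_add]
  refine sum_congr rfl fun ij _ => ?_
  rw [hhat_natCast_add_one _ hq, hhat_natCast_add_one _ hα, mul_comm]

theorem frac_diff_hhat_general (q α : ℝ) (hq1 : q < 1)
    (hα : ∀ n : ℕ, α ≠ -(n : ℝ)) (hαq : ∀ n : ℕ, α - q + 1 ≠ -(n : ℝ))
    (t : ℕ) (ht : 1 ≤ t) :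
    fracSum q α t - fracSum q α (t - 1) = hhat (α - q) (t : ℝ) := by
  have hΓq : Real.Gamma (-q + 1) ≠ 0 := (Real.Gamma_pos_of_pos (by linarith)).ne'
  have hΓα : Real.Gamma (α + 1) ≠ 0 :=
    Real.Gamma_ne_zero fun m h => hα (m + 1) (by push_cast; linarith)
  obtain ⟨n, rfl⟩ := Nat.exists_eq_add_of_le' ht
  rw [Nat.add_sub_cancel, fracSum_succ q α hΓq hΓα, Nat.cast_succ,
    hhat_natCast_add_one _ (Real.Gamma_ne_zero hαq)]
  cases n with
  | zero => simp [fracSum]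
  | succ m =>
    rw [fracSum_succ q α hΓq hΓα, show α - q + 2 = α - q + 1 + 1 by ring,
      Ring.multichoose_succ_succ]
    ring

/-- The Riemann–Liouville fractional difference of order `q` of `ĥ_α`:
`∇_1^q ĥ_α(t) = D(t) − D(t−1) = ĥ_{α−q}(t)` where `D = ∇_1^{−(1−q)} ĥ_α`. -/
theorem frac_diff_hhat (q α : ℝ) (hq0 : 0 < q) (hq1 : q < 1)
    (hα : ∀ n : ℕ, α ≠ -(n : ℝ)) (hαq : ∀ n : ℕ, α - q + 1 ≠ -(n : ℝ))
    (t : ℕ) (ht : 1 ≤ t) :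
    fracSum q α t - fracSum q α (t - 1) = hhat (α - q) (t : ℝ) :=
  frac_diff_hhat_general q α hq1 hα hαq t ht
end

section
/- Let 0 < λ < 1 and 0 < q < 1, and define G(z) := λz/((1−z)^q + λ) for real z < 1. Then the derivative of G tends to +∞ as z tends to 1 from the left: Tendsto (deriv G) (𝓝[<] 1) atTop. (Hence the expected waiting time E[T^q] is infinite for 0 < q < 1: the waiting time is heavy-tailed.) -/
open Filter Topology

/-!
Away from `z = 1` the quotient rule gives
`G'(z) = λ / D(z) + λ q z (1 - z)^(q-1) / D(z)^2` with `D(z) = (1 - z)^q + λ`.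
As `z → 1⁻`, `D(z) → λ > 0`, so the first summand stays bounded while the factor
`(1 - z)^(q-1)` of the second blows up because its exponent is negative.
-/

lemma tendsto_sub_nhdsLT_nhdsGT_zero (a : ℝ) :
    Tendsto (fun w : ℝ => a - w) (𝓝[<] a) (𝓝[>] 0) := by
  refine tendsto_nhdsWithin_of_tendsto_nhds_of_eventually_within _ ?_ ?_
  · simpa using ((continuous_sub_left a).tendsto a).mono_left nhdsWithin_le_nhds
  · filter_upwards [self_mem_nhdsWithin] with w (hw : w < a) using sub_pos.mpr hw

lemma tendsto_one_sub_rpow_nhdsLT_one_atTop {p : ℝ} (hp : p < 0) :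
    Tendsto (fun w : ℝ => (1 - w) ^ p) (𝓝[<] 1) atTop :=
  (tendsto_rpow_neg_nhdsGT_zero hp).comp (tendsto_sub_nhdsLT_nhdsGT_zero 1)

lemma tendsto_one_sub_rpow_nhds_one_zero {p : ℝ} (hp : 0 < p) :
    Tendsto (fun w : ℝ => (1 - w) ^ p) (𝓝 1) (𝓝 0) := by
  have hcont : ContinuousAt (fun w : ℝ => (1 - w) ^ p) 1 :=
    (continuousAt_const.sub continuousAt_id).rpow_const (Or.inr hp.le)
  simpa [Real.zero_rpow hp.ne'] using hcont.tendsto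

lemma hasDerivAt_one_sub_rpow (q : ℝ) {w : ℝ} (hw : w < 1) :
    HasDerivAt (fun w : ℝ => (1 - w) ^ q) (-(q * (1 - w) ^ (q - 1))) w := by
  have h := ((hasDerivAt_id w).const_sub 1).rpow_const (p := q) (Or.inl (sub_pos.mpr hw).ne')
  simpa using h

lemma hasDerivAt_mul_div_one_sub_rpow_add (lam q : ℝ) {w : ℝ} (hw : w < 1)
    (hden : (1 - w) ^ q + lam ≠ 0) :
    HasDerivAt (fun w : ℝ => lam * w / ((1 - w) ^ q + lam))
      (lam / ((1 - w) ^ q + lam) + lam * q * w / ((1 - w) ^ q + lam) ^ 2 * (1 - w) ^ (q - 1))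
      w := by
  have h := ((hasDerivAt_id' w).const_mul lam).fun_div
    ((hasDerivAt_one_sub_rpow q hw).add_const lam) hden
  refine h.congr_deriv ?_
  field_simp
  ring

theorem deriv_pgf_tendsto_atTop_general (lam q : ℝ) (hlam0 : 0 < lam)
    (hq0 : 0 < q) (hq1 : q < 1) :
    Tendsto (deriv fun w : ℝ => lam * w / ((1 - w) ^ q + lam)) (𝓝[<] (1 : ℝ)) atTop := by
  have hden : Tendsto (fun w : ℝ => (1 - w) ^ q + lam) (𝓝[<] 1) (𝓝 lam) := by
    simpa using
      ((tendsto_one_sub_rpow_nhds_one_zero hq0).mono_left nhdsWithin_le_nhds).add_const lam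
  have hid : Tendsto (fun w : ℝ => w) (𝓝[<] 1) (𝓝 1) :=
    tendsto_id.mono_left nhdsWithin_le_nhds
  have hbounded :
      Tendsto (fun w : ℝ => lam / ((1 - w) ^ q + lam)) (𝓝[<] 1) (𝓝 (lam / lam)) :=
    tendsto_const_nhds.div hden hlam0.ne'
  have hcoeff : Tendsto (fun w : ℝ => lam * q * w / ((1 - w) ^ q + lam) ^ 2) (𝓝[<] 1)
      (𝓝 (lam * q * 1 / lam ^ 2)) :=
    (tendsto_const_nhds.mul hid).div (hden.pow 2) (by positivity)
  have hblowup := hcoeff.pos_mul_atTop (by positivity)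
    (tendsto_one_sub_rpow_nhdsLT_one_atTop (sub_neg.mpr hq1))
  refine (hbounded.add_atTop hblowup).congr' ?_
  filter_upwards [self_mem_nhdsWithin] with w (hw : w < 1)
  have hpos : 0 < (1 - w) ^ q + lam := add_pos (Real.rpow_pos_of_pos (sub_pos.mpr hw) q) hlam0
  exact ((hasDerivAt_mul_div_one_sub_rpow_add lam q hw hpos.ne').deriv).symm

/-- For `0 < q < 1`, the derivative of the waiting-time probability generating function
`G(z) = λz/((1−z)^q + λ)` tends to `+∞` as `z → 1⁻`: the mean waiting time is infinite. -/
theorem deriv_pgf_tendsto_atTop (lam q : ℝ) (hlam0 : 0 < lam) (hlam1 : lam < 1)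
    (hq0 : 0 < q) (hq1 : q < 1) :
    Tendsto (deriv fun w : ℝ => lam * w / ((1 - w) ^ q + lam)) (𝓝[<] (1 : ℝ)) atTop :=
  deriv_pgf_tendsto_atTop_general lam q hlam0 hq0 hq1
end

section
/- Let 0 < λ < 1 and 0 < q < 1. For every real z with 0 < z < 1, λ(1 − (1−z)^q)/((1−z)^q + λ) < λz/((1−z)^q + λ). (Consequently, the probability generating function G_sub(z) = G¹(S_q(z)) of the waiting time of the Sibuya-subordinated discrete Poisson process is strictly smaller on (0,1) than the renewal-process probability generating function G(z) = λz/((1−z)^q + λ), so the two discrete-time fractional Poisson processes follow different probability laws.) -/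
/-- The probability generating function of the Sibuya-subordinated discrete Poisson process
is strictly smaller on `(0,1)` than that of the renewal-based discrete fractional Poisson
process: for `0 < z < 1`, `λ(1 − (1−z)^q)/((1−z)^q + λ) < λz/((1−z)^q + λ)`. -/
theorem sub_pgf_lt_renewal_pgf (lam q : ℝ) (hlam0 : 0 < lam) (hlam1 : lam < 1)
    (hq0 : 0 < q) (hq1 : q < 1) (z : ℝ) (hz0 : 0 < z) (hz1 : z < 1) :
    lam * (1 - (1 - z) ^ q) / ((1 - z) ^ q + lam) <
      lam * z / ((1 - z) ^ q + lam) := by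
  have h1 : (0:ℝ) < 1 - z := by linarith
  have h2 : (1 - z) < (1 - z) ^ q := by
    have := Real.rpow_lt_rpow_of_exponent_gt h1 (by linarith) hq1
    simpa using this
  have hpos : 0 < (1 - z) ^ q := Real.rpow_pos_of_pos h1 q
  have hden : 0 < (1 - z) ^ q + lam := by linarith
  apply div_lt_div_of_pos_right ?_ hden
  nlinarith
end
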